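/- arXiv:2605.15348 — 6 statements merged into one kernel-verified Lean document; each statement's English description precedes it below -/
import Mathlib

section
/- Chernoff–Hoeffding tail bound for the binomial distribution with a shifted threshold: let N ≥ 1 be a natural number, let p ∈ [0,1], and let t be a real number with t ≥ p·N. Then the probability that a binomial random variable X ~ Bin(N, p) satisfies X ≥ t is at most exp(−2(t − pN)²/N); that is, ∑_{k ∈ {0,…,N}, (k:ℝ) ≥ t} Bin(N,p)(k) ≤ exp(−2(t − pN)²/N). -/
/-!
Chernoff's method: for `l ≥ 0` the tail `P(X ≥ t)` is at most `exp (-l t) E[exp (l X)]`, and by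
the binomial theorem `E[exp (l X)] = (1 - p + p eˡ) ^ N`. Hoeffding's lemma for a Bernoulli
variable bounds `1 - p + p eˡ` by `exp (l p + l² / 8)`, and `l = 4 (t - p N) / N` optimizes the
resulting exponent `N (l p + l² / 8) - l t`.
-/

open Real Finset ProbabilityTheory MeasureTheory

lemma one_sub_add_mul_exp_le {p : ℝ} (hp0 : 0 ≤ p) (hp1 : p ≤ 1) (l : ℝ) :
    1 - p + p * exp l ≤ exp (l * p + l ^ 2 / 8) := by
  let μ : Measure ℝ := bernoulliMeasure 1 0 ⟨p, hp0, hp1⟩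
  have hoeffding := (hasSubgaussianMGF_of_mem_Icc (X := id) (μ := μ) (a := 0) (b := 1)
    aemeasurable_id (by simp [μ, ae_iff, bernoulliMeasure_def])).mgf_le l
  have hmgf : mgf (fun x => id x - μ[id]) μ l = exp (-(l * p)) * (1 - p + p * exp l) := by
    simp only [mgf, μ, integral_bernoulliMeasure, smul_eq_mul, id, mul_one, mul_zero, add_zero,
      zero_sub]
    rw [show l * (1 - p) = -(l * p) + l by ring, exp_add, mul_neg]
    ring
  have hvar : (((‖(1 : ℝ) - 0‖₊ / 2) ^ 2 : NNReal) : ℝ) = 1 / 4 := by norm_num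
  rw [hmgf, hvar, ← le_div_iff₀' (exp_pos _), ← exp_sub] at hoeffding
  exact hoeffding.trans_eq (by ring_nf)

lemma sum_filter_le_le_exp_neg_mul_sum {ι : Type*} (s : Finset ι) {w : ι → ℝ}
    (hw : ∀ i ∈ s, 0 ≤ w i) (x : ι → ℝ) {l : ℝ} (hl : 0 ≤ l) (t : ℝ) :
    ∑ i ∈ s with t ≤ x i, w i ≤ exp (-(l * t)) * ∑ i ∈ s, w i * exp (l * x i) := by
  rw [mul_sum]
  calc _ ≤ ∑ i ∈ s with t ≤ x i, exp (-(l * t)) * (w i * exp (l * x i)) := by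
        refine sum_le_sum fun i hi => ?_
        obtain ⟨his, hti⟩ := mem_filter.mp hi
        have : 1 ≤ exp (-(l * t)) * exp (l * x i) := by
          rw [← exp_add]
          exact one_le_exp (by nlinarith)
        nlinarith [hw i his]
    _ ≤ ∑ i ∈ s, exp (-(l * t)) * (w i * exp (l * x i)) :=
        sum_le_sum_of_subset_of_nonneg (filter_subset _ _) fun i hi _ => by
          have := hw i hi
          positivity

lemma sum_choose_mul_pow_mul_exp (N : ℕ) (p l : ℝ) :
    ∑ k ∈ range (N + 1), N.choose k * p ^ k * (1 - p) ^ (N - k) * exp (l * k)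
      = (1 - p + p * exp l) ^ N := by
  rw [add_comm (1 - p), add_pow]
  refine sum_congr rfl fun k _ => ?_
  rw [mul_comm l, exp_nat_mul]
  ring

lemma binomial_tail_le_exp (N : ℕ) {p : ℝ} (hp0 : 0 ≤ p) (hp1 : p ≤ 1) (t : ℝ) {l : ℝ}
    (hl : 0 ≤ l) :
    ∑ k ∈ (range (N + 1)).filter (fun k : ℕ => t ≤ (k : ℝ)),
        (N.choose k : ℝ) * p ^ k * (1 - p) ^ (N - k)
      ≤ exp (N * (l * p + l ^ 2 / 8) - l * t) := by
  have hq : 0 ≤ 1 - p := by linarith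
  calc _ ≤ exp (-(l * t)) *
          ∑ k ∈ range (N + 1), N.choose k * p ^ k * (1 - p) ^ (N - k) * exp (l * k) :=
        sum_filter_le_le_exp_neg_mul_sum _ (fun k _ => by positivity) _ hl t
    _ = exp (-(l * t)) * (1 - p + p * exp l) ^ N := by rw [sum_choose_mul_pow_mul_exp]
    _ ≤ exp (-(l * t)) * exp (l * p + l ^ 2 / 8) ^ N := by
        gcongr
        exact one_sub_add_mul_exp_le hp0 hp1 l
    _ = exp (N * (l * p + l ^ 2 / 8) - l * t) := by
        rw [← exp_nat_mul, ← exp_add]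
        ring_nf

/-- Chernoff–Hoeffding tail bound for the binomial distribution with a shifted
threshold: for `N ≥ 1` trials with success probability `p ∈ [0,1]` and a threshold
`t ≥ pN`, the probability that a binomial random variable is at least `t` is at
most `exp(−2(t − pN)²/N)`. -/
theorem binomial_chernoff_hoeffding (N : ℕ) (hN : 1 ≤ N) (p : ℝ)
    (hp0 : 0 ≤ p) (hp1 : p ≤ 1) (t : ℝ) (ht : p * N ≤ t) :
    ∑ k ∈ (Finset.range (N + 1)).filter (fun k : ℕ => t ≤ (k : ℝ)),
        (N.choose k : ℝ) * p ^ k * (1 - p) ^ (N - k)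
      ≤ Real.exp (-2 * (t - p * N) ^ 2 / N) := by
  have hNpos : (0 : ℝ) < N := by exact_mod_cast hN
  have hl : 0 ≤ 4 * (t - p * N) / N := div_nonneg (by linarith) hNpos.le
  refine (binomial_tail_le_exp N hp0 hp1 t hl).trans_eq (congrArg exp ?_)
  field_simp
  ring
end

section
/- Finite-size union bound over pure-Z logical supports (quantitative core of Theorem 1): fix n, m ≥ 1 natural numbers and p ∈ ℝ with 0 ≤ p < 1/2. Let E be a random subset of Fin n in which each element is included independently with probability p, and let 𝓛 be a finite family of finite subsets of Fin n, each of cardinality at least m. Then the probability of the event { ∃ L ∈ 𝓛 with 2·|E ∩ L| ≥ |L| } is at most |𝓛| · exp(−2m(1/2 − p)²). -/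
open MeasureTheory

/-- The product over `Fin n` of the Bernoulli measure on `Bool` assigning
probability `p` to `true` (for `0 ≤ p ≤ 1`, where the clamping by `1` is inert). -/
noncomputable def productBernoulli (n : ℕ) (p : ℝ) : Measure (Fin n → Bool) :=
  Measure.pi fun _ =>
    (PMF.bernoulli (min (Real.toNNReal p) 1) (min_le_right _ _)).toMeasure

/-- The random error subset of `Fin n` determined by a sample `ω : Fin n → Bool`. -/
def errSet {n : ℕ} (ω : Fin n → Bool) : Finset (Fin n) :=
  Finset.univ.filter fun i => ω i = true

/-! Union bound over `𝓛`. For a single `L`, `|E ∩ L| - p|L|` is a sum of `|L|` independent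
centred indicators with values in an interval of length `1`, so by Hoeffding's inequality it
exceeds `|L|(1/2 - p)` with probability at most `exp(-2|L|(1/2 - p)²) ≤ exp(-2m(1/2 - p)²)`. -/

open MeasureTheory ProbabilityTheory Finset Real
open scoped NNReal

instance (n : ℕ) (p : ℝ) : IsProbabilityMeasure (productBernoulli n p) := by
  unfold productBernoulli; infer_instance

section
variable {n : ℕ} {p : ℝ}

lemma integral_productBernoulli_ite_apply (hp0 : 0 ≤ p) (hp1 : p ≤ 1) (i : Fin n) :
    ∫ ω, (if ω i then 1 else 0 : ℝ) ∂productBernoulli n p = p := by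
  refine (integral_comp_eval (X := fun _ ↦ Bool) (i := i)
    (f := fun b ↦ if b = true then (1 : ℝ) else 0) .of_discrete).trans ?_
  rw [PMF.integral_eq_sum]
  simp [PMF.bernoulli_apply, Real.toNNReal_le_one.2 hp1, hp0]

lemma hasSubgaussianMGF_productBernoulli_ite_apply_sub (hp0 : 0 ≤ p) (hp1 : p ≤ 1)
    (i : Fin n) :
    HasSubgaussianMGF (fun ω ↦ (if ω i then 1 else 0 : ℝ) - p) 4⁻¹
      (productBernoulli n p) := by
  have := hasSubgaussianMGF_of_mem_Icc (μ := productBernoulli n p)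
    (X := fun ω ↦ if ω i then (1 : ℝ) else 0) (a := 0) (b := 1) .of_discrete
    (ae_of_all _ fun ω ↦ by split_ifs <;> simp)
  rw [integral_productBernoulli_ite_apply hp0 hp1] at this
  convert this
  norm_num

lemma iIndepFun_productBernoulli_ite_apply_sub :
    iIndepFun (fun i ω ↦ (if ω i then 1 else 0 : ℝ) - p) (productBernoulli n p) :=
  iIndepFun_pi (X := fun (_ : Fin n) b ↦ (if b = true then 1 else 0 : ℝ) - p)
    fun _ ↦ .of_discrete

lemma card_errSet_inter_eq_sum (ω : Fin n → Bool) (L : Finset (Fin n)) :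
    ((errSet ω ∩ L).card : ℝ) = ∑ i ∈ L, if ω i then 1 else 0 := by
  rw [sum_boole, errSet, filter_inter, univ_inter]

lemma measure_half_le_card_errSet_inter_le (hp0 : 0 ≤ p) (hp : p ≤ 1 / 2)
    (L : Finset (Fin n)) :
    productBernoulli n p {ω | L.card ≤ 2 * (errSet ω ∩ L).card}
      ≤ ENNReal.ofReal (exp (-2 * L.card * (1 / 2 - p) ^ 2)) := by
  set ε : ℝ := L.card * (1 / 2 - p)
  have h_sub : {ω | L.card ≤ 2 * (errSet ω ∩ L).card}
      ⊆ {ω | ε ≤ ∑ i ∈ L, ((if ω i then 1 else 0 : ℝ) - p)} := by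
    intro ω hω
    have : (L.card : ℝ) ≤ 2 * (errSet ω ∩ L).card := by exact_mod_cast hω
    simp only [Set.mem_ofPred_eq, sum_sub_distrib, sum_const, nsmul_eq_mul, ε,
      ← card_errSet_inter_eq_sum]
    linarith
  have h_exponent : -ε ^ 2 / (2 * ((∑ _i ∈ L, 4⁻¹ : ℝ≥0) : ℝ))
      = -2 * L.card * (1 / 2 - p) ^ 2 := by
    rcases eq_or_ne (L.card : ℝ) 0 with hL | hL
    · simp [ε, hL]
    · simp only [ε, sum_const, nsmul_eq_mul, NNReal.coe_mul, NNReal.coe_natCast,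
        NNReal.coe_inv, NNReal.coe_ofNat]
      field_simp
      ring
  refine (measure_mono h_sub).trans ?_
  rw [← ofReal_measureReal, ← h_exponent]
  exact ENNReal.ofReal_le_ofReal <| HasSubgaussianMGF.measure_sum_ge_le_of_iIndepFun
    iIndepFun_productBernoulli_ite_apply_sub
    (fun i _ ↦ hasSubgaussianMGF_productBernoulli_ite_apply_sub hp0 (by linarith) i)
    (mul_nonneg L.card.cast_nonneg (by linarith))

end

theorem union_bound_pure_Z_logicals_general (n m : ℕ)
    (p : ℝ) (hp0 : 0 ≤ p) (hp : p < 1 / 2)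
    (𝓛 : Finset (Finset (Fin n))) (hcard : ∀ L ∈ 𝓛, m ≤ L.card) :
    productBernoulli n p {ω | ∃ L ∈ 𝓛, L.card ≤ 2 * (errSet ω ∩ L).card}
      ≤ ENNReal.ofReal ((𝓛.card : ℝ) * Real.exp (-2 * m * (1 / 2 - p) ^ 2)) := by
  have h_each (L) (hL : L ∈ 𝓛) :
      productBernoulli n p {ω | L.card ≤ 2 * (errSet ω ∩ L).card}
        ≤ ENNReal.ofReal (exp (-2 * m * (1 / 2 - p) ^ 2)) := by
    refine (measure_half_le_card_errSet_inter_le hp0 hp.le L).trans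
      (ENNReal.ofReal_le_ofReal (exp_le_exp.2 ?_))
    have : (m : ℝ) ≤ L.card := by exact_mod_cast hcard L hL
    nlinarith [sq_nonneg (1 / 2 - p)]
  calc productBernoulli n p {ω | ∃ L ∈ 𝓛, L.card ≤ 2 * (errSet ω ∩ L).card}
      = productBernoulli n p (⋃ L ∈ 𝓛, {ω | L.card ≤ 2 * (errSet ω ∩ L).card}) := by
        congr 1; ext; simp
    _ ≤ ∑ L ∈ 𝓛, productBernoulli n p {ω | L.card ≤ 2 * (errSet ω ∩ L).card} :=
        measure_biUnion_finset_le _ _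
    _ ≤ ∑ _L ∈ 𝓛, ENNReal.ofReal (exp (-2 * m * (1 / 2 - p) ^ 2)) := sum_le_sum h_each
    _ = _ := by
        rw [sum_const, nsmul_eq_mul, ENNReal.ofReal_mul (by positivity), ENNReal.ofReal_natCast]

/-- Finite-size union bound over pure-Z logical supports: if every `L ∈ 𝓛` has
cardinality at least `m`, then the probability that some `L ∈ 𝓛` has at least half
of its support in error is at most `|𝓛| · exp(−2m(1/2 − p)²)`. -/
theorem union_bound_pure_Z_logicals (n m : ℕ) (hn : 1 ≤ n) (hm : 1 ≤ m)
    (p : ℝ) (hp0 : 0 ≤ p) (hp : p < 1 / 2)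
    (𝓛 : Finset (Finset (Fin n))) (hcard : ∀ L ∈ 𝓛, m ≤ L.card) :
    productBernoulli n p {ω | ∃ L ∈ 𝓛, L.card ≤ 2 * (errSet ω ∩ L).card}
      ≤ ENNReal.ofReal ((𝓛.card : ℝ) * Real.exp (-2 * m * (1 / 2 - p) ^ 2)) :=
  union_bound_pure_Z_logicals_general n m p hp0 hp 𝓛 hcard
end

section
/- Theorem 1 (50% infinite-bias threshold from subexponential growth of pure-Z logicals), asymptotic form: let K > 0 and α > 0 be real constants and p ∈ [0, 1/2). For each n, let 𝓛ₙ be a finite family of finite subsets of Fin n, each of cardinality at least K·n^α, and suppose (log |𝓛ₙ|)/n^α → 0 as n → ∞. Then there exists c > 0 such that for all sufficiently large n, the probability (under the random subset E of Fin n in which each element is included independently with probability p) of the event { ∃ L ∈ 𝓛ₙ with 2·|E ∩ L| ≥ |L| } is at most exp(−c·n^α); in particular this probability tends to 0. -/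
open MeasureTheory

/-! For a single `L`, the event `|L| ≤ 2 |E ∩ L|` is covered by the at most `2 ^ |L|`
cylinders `{E ∩ L = S}` with `|L| ≤ 2 |S|`, each of probability
`p ^ |S| (1 - p) ^ (|L| - |S|) ≤ (p (1 - p)) ^ (|L| / 2)`. Hence it has probability at most
`r ^ |L|` with `r = 2 √(p (1 - p)) < 1`, i.e. at most `exp (-D K n ^ α)` for some `D > 0`.
A union bound over `𝓛ₙ` multiplies this by `|𝓛ₙ| = exp (o (n ^ α))`, which costs only half
of the exponent. -/

open Finset Filter Real Topology

lemma measure_biUnion_finset_le_card_mul {Ω β : Type*} [MeasurableSpace Ω] (μ : Measure Ω)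
    (s : Finset β) (A : β → Set Ω) {b : ENNReal} (h : ∀ x ∈ s, μ (A x) ≤ b) :
    μ (⋃ x ∈ s, A x) ≤ #s * b :=
  calc μ (⋃ x ∈ s, A x) ≤ ∑ x ∈ s, μ (A x) := measure_biUnion_finset_le s A
    _ ≤ #s • b := sum_le_card_nsmul s _ b h
    _ = #s * b := nsmul_eq_mul _ _

lemma pow_mul_one_sub_pow_le_sqrt_pow {p : ℝ} (hp0 : 0 ≤ p) (hp : p ≤ 1 / 2) {k m : ℕ}
    (hkm : k ≤ m) (hmk : m ≤ 2 * k) :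
    p ^ k * (1 - p) ^ (m - k) ≤ √(p * (1 - p)) ^ m := by
  set s := √(p * (1 - p))
  have hs_sq : s ^ 2 = p * (1 - p) := sq_sqrt (by nlinarith)
  -- `p ≤ s` because `p ^ 2 ≤ p * (1 - p)` exactly when `p ≤ 1 / 2`
  have hps : p ≤ s := le_sqrt_of_sq_le (by nlinarith)
  calc p ^ k * (1 - p) ^ (m - k) = p ^ (2 * k - m) * (s ^ 2) ^ (m - k) := by
        rw [hs_sq, mul_pow, ← mul_assoc, ← pow_add, show 2 * k - m + (m - k) = k by omega]
    _ ≤ s ^ (2 * k - m) * (s ^ 2) ^ (m - k) := by gcongr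
    _ = s ^ m := by rw [← pow_mul, ← pow_add]; congr 1; omega

lemma two_mul_sqrt_mul_one_sub_lt_one {p : ℝ} (hp : p ≠ 1 / 2) : 2 * √(p * (1 - p)) < 1 := by
  have h : √(p * (1 - p)) < 1 / 2 :=
    (sqrt_lt' (by norm_num)).2 (by nlinarith [sq_pos_of_ne_zero (sub_ne_zero.2 hp)])
  linarith

section BernoulliProduct

variable {ι : Type*} [Fintype ι] [DecidableEq ι] {μ : ι → Measure Bool}
  [∀ i, IsProbabilityMeasure (μ i)] {p : ℝ}

lemma measure_pi_setOf_forall_mem_eq_decide (hμ : ∀ i, μ i {true} = ENNReal.ofReal p)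
    {L S : Finset ι} (hSL : S ⊆ L) :
    Measure.pi μ {ω | ∀ i ∈ L, ω i = decide (i ∈ S)}
      = ENNReal.ofReal p ^ #S * (1 - ENNReal.ofReal p) ^ #(L \ S) := by
  have hfalse : ∀ i, μ i {false} = 1 - ENNReal.ofReal p := fun i => by
    rw [show ({false} : Set Bool) = {true}ᶜ by simp,
      prob_compl_eq_one_sub (measurableSet_singleton _), hμ]
  have hcyl : {ω : ι → Bool | ∀ i ∈ L, ω i = decide (i ∈ S)}
      = Set.univ.pi fun i => if i ∈ L then {decide (i ∈ S)} else Set.univ := by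
    ext ω
    simp only [Set.mem_ofPred_eq, Set.mem_univ_pi]
    refine forall_congr' fun i => ?_
    split_ifs <;> simp [*]
  have hprod : ∏ i ∈ L, μ i {decide (i ∈ S)}
      = (∏ _i ∈ L \ S, (1 - ENNReal.ofReal p)) * ∏ _i ∈ S, ENNReal.ofReal p := by
    rw [← prod_sdiff hSL]
    congr 1
    · exact prod_congr rfl fun i hi => by simp [(Finset.mem_sdiff.1 hi).2, hfalse]
    · exact prod_congr rfl fun i hi => by simp [hi, hμ]
  simp_rw [hcyl, Measure.pi_pi, apply_ite (μ _), measure_univ, prod_ite_mem, univ_inter, hprod,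
    prod_const, mul_comm]

lemma measure_pi_card_le_two_mul_card_filter_le (hμ : ∀ i, μ i {true} = ENNReal.ofReal p)
    (hp0 : 0 ≤ p) (hp : p ≤ 1 / 2) (L : Finset ι) :
    Measure.pi μ {ω | #L ≤ 2 * #(L.filter fun i => ω i = true)}
      ≤ ENNReal.ofReal ((2 * √(p * (1 - p))) ^ #L) := by
  set P := L.powerset.filter fun S => #L ≤ 2 * #S
  have hsub : {ω : ι → Bool | #L ≤ 2 * #(L.filter fun i => ω i = true)}
      ⊆ ⋃ S ∈ P, {ω | ∀ i ∈ L, ω i = decide (i ∈ S)} := fun ω hω =>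
    Set.mem_biUnion (x := L.filter fun i => ω i = true)
      (mem_filter.2 ⟨mem_powerset.2 (filter_subset _ _), hω⟩) fun i hi => by simp [hi]
  have hcyl : ∀ S ∈ P, Measure.pi μ {ω | ∀ i ∈ L, ω i = decide (i ∈ S)}
      ≤ ENNReal.ofReal (√(p * (1 - p)) ^ #L) := fun S hS => by
    obtain ⟨hSL, hLS⟩ := mem_filter.1 hS
    rw [mem_powerset] at hSL
    rw [measure_pi_setOf_forall_mem_eq_decide hμ hSL, ← ENNReal.ofReal_one,
      ← ENNReal.ofReal_sub _ hp0, ← ENNReal.ofReal_pow hp0,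
      ← ENNReal.ofReal_pow (by linarith), ← ENNReal.ofReal_mul (by positivity),
      card_sdiff_of_subset hSL]
    exact ENNReal.ofReal_le_ofReal
      (pow_mul_one_sub_pow_le_sqrt_pow hp0 hp (card_le_card hSL) hLS)
  have hP : (#P : ENNReal) ≤ 2 ^ #L := by
    exact_mod_cast (card_filter_le _ _).trans (card_powerset L).le
  calc Measure.pi μ {ω | #L ≤ 2 * #(L.filter fun i => ω i = true)}
      ≤ #P * ENNReal.ofReal (√(p * (1 - p)) ^ #L) :=
        (measure_mono hsub).trans (measure_biUnion_finset_le_card_mul _ _ _ hcyl)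
    _ ≤ 2 ^ #L * ENNReal.ofReal (√(p * (1 - p)) ^ #L) := by gcongr
    _ = ENNReal.ofReal ((2 * √(p * (1 - p))) ^ #L) := by
        rw [mul_pow, ENNReal.ofReal_mul (by positivity), ENNReal.ofReal_pow zero_le_two,
          ENNReal.ofReal_ofNat]

end BernoulliProduct

lemma productBernoulli_card_le_two_mul_card_inter_le {n : ℕ} {p : ℝ} (hp0 : 0 ≤ p)
    (hp : p ≤ 1 / 2) (L : Finset (Fin n)) :
    productBernoulli n p {ω | #L ≤ 2 * #(errSet ω ∩ L)}
      ≤ ENNReal.ofReal ((2 * √(p * (1 - p))) ^ #L) := by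
  have htrue : ∀ _ : Fin n,
      (PMF.bernoulli (min p.toNNReal 1) (min_le_right _ _)).toMeasure {true}
        = ENNReal.ofReal p := fun _ => by
    rw [PMF.toMeasure_apply_singleton _ _ (measurableSet_singleton _), PMF.bernoulli_apply,
      cond_true, min_eq_left (toNNReal_le_one.2 (by linarith))]
    rfl
  simpa only [productBernoulli, errSet, filter_inter, univ_inter] using
    measure_pi_card_le_two_mul_card_filter_le htrue hp0 hp L

lemma exists_pow_le_exp_neg_mul {r : ℝ} (hr0 : 0 ≤ r) (hr1 : r < 1) :
    ∃ D > 0, ∀ m : ℕ, r ^ m ≤ exp (-(D * m)) := by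
  obtain ⟨r', hrr', hr'1⟩ := exists_between hr1
  have hr'0 : 0 < r' := hr0.trans_lt hrr'
  refine ⟨-log r', neg_pos.2 (log_neg hr'0 hr'1), fun m => ?_⟩
  calc r ^ m ≤ r' ^ m := pow_le_pow_left₀ hr0 hrr'.le m
    _ = exp (-(-log r' * m)) := by
        rw [neg_mul, neg_neg, mul_comm, ← log_pow, exp_log (pow_pos hr'0 m)]

lemma eventually_natCast_mul_exp_neg_mul_rpow_le {N : ℕ → ℕ} {α C : ℝ} (hC : 0 < C)
    (hN : Tendsto (fun n : ℕ => log (N n) / (n : ℝ) ^ α) atTop (𝓝 0)) :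
    ∀ᶠ n : ℕ in atTop, (N n : ℝ) * exp (-C * n ^ α) ≤ exp (-(C / 2) * n ^ α) := by
  filter_upwards [hN.eventually_lt_const (half_pos hC), eventually_ge_atTop 1] with n hlt hn
  have hlog : log (N n) < C / 2 * n ^ α :=
    (div_lt_iff₀ (rpow_pos_of_pos (by exact_mod_cast hn) α)).1 hlt
  calc (N n : ℝ) * exp (-C * n ^ α) ≤ exp (log (N n)) * exp (-C * n ^ α) := by
        gcongr; exact le_exp_log _
    _ = exp (log (N n) - C * n ^ α) := by rw [← exp_add, neg_mul, sub_eq_add_neg]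
    _ ≤ exp (-(C / 2) * n ^ α) := exp_le_exp.2 (by linarith)

lemma tendsto_exp_neg_mul_rpow_natCast {c α : ℝ} (hc : 0 < c) (hα : 0 < α) :
    Tendsto (fun n : ℕ => exp (-c * (n : ℝ) ^ α)) atTop (𝓝 0) := by
  have h := ((tendsto_rpow_atTop hα).comp tendsto_natCast_atTop_atTop).const_mul_atTop hc
  simpa only [neg_mul, Function.comp_def] using tendsto_exp_atBot.comp (tendsto_neg_atTop_atBot.comp h)

/-- Theorem 1 (50% infinite-bias threshold from subexponential growth of pure-Z
logicals), asymptotic form: if every `L ∈ 𝓛ₙ` has cardinality at least `K·n^α` and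
`log |𝓛ₙ| / n^α → 0`, then for some `c > 0` the failure probability is eventually
at most `exp(−c·n^α)`; in particular it tends to `0`. -/
theorem fifty_percent_threshold_subexponential (K α p : ℝ)
    (hK : 0 < K) (hα : 0 < α) (hp0 : 0 ≤ p) (hp : p < 1 / 2)
    (𝓛 : (n : ℕ) → Finset (Finset (Fin n)))
    (hcard : ∀ n : ℕ, ∀ L ∈ 𝓛 n, K * (n : ℝ) ^ α ≤ (L.card : ℝ))
    (hsubexp : Filter.Tendsto (fun n : ℕ => Real.log ((𝓛 n).card : ℝ) / (n : ℝ) ^ α)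
      Filter.atTop (nhds 0)) :
    ∃ c > 0,
      (∀ᶠ n : ℕ in Filter.atTop,
          productBernoulli n p {ω | ∃ L ∈ 𝓛 n, L.card ≤ 2 * (errSet ω ∩ L).card}
            ≤ ENNReal.ofReal (Real.exp (-c * (n : ℝ) ^ α))) ∧
      Filter.Tendsto
        (fun n : ℕ =>
          productBernoulli n p {ω | ∃ L ∈ 𝓛 n, L.card ≤ 2 * (errSet ω ∩ L).card})
        Filter.atTop (nhds 0) := by
  obtain ⟨D, hD, hpow⟩ := exists_pow_le_exp_neg_mul (by positivity)
    (two_mul_sqrt_mul_one_sub_lt_one hp.ne)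
  have hbound : ∀ n, ∀ L ∈ 𝓛 n, productBernoulli n p {ω | #L ≤ 2 * #(errSet ω ∩ L)}
      ≤ ENNReal.ofReal (exp (-(D * K) * (n : ℝ) ^ α)) := fun n L hL =>
    (productBernoulli_card_le_two_mul_card_inter_le hp0 hp.le L).trans <|
      ENNReal.ofReal_le_ofReal <| (hpow _).trans <| exp_le_exp.2 <| by nlinarith [hcard n L hL]
  have hfail : ∀ᶠ n : ℕ in atTop,
      productBernoulli n p {ω | ∃ L ∈ 𝓛 n, #L ≤ 2 * #(errSet ω ∩ L)}
        ≤ ENNReal.ofReal (exp (-(D * K / 2) * (n : ℝ) ^ α)) := by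
    filter_upwards [eventually_natCast_mul_exp_neg_mul_rpow_le (mul_pos hD hK) hsubexp] with n hn
    calc productBernoulli n p {ω | ∃ L ∈ 𝓛 n, #L ≤ 2 * #(errSet ω ∩ L)}
        = productBernoulli n p (⋃ L ∈ 𝓛 n, {ω | #L ≤ 2 * #(errSet ω ∩ L)}) := by
          congr 1; ext; simp
      _ ≤ #(𝓛 n) * ENNReal.ofReal (exp (-(D * K) * (n : ℝ) ^ α)) :=
          measure_biUnion_finset_le_card_mul _ _ _ (hbound n)
      _ ≤ ENNReal.ofReal (exp (-(D * K / 2) * (n : ℝ) ^ α)) := by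
          rw [← ENNReal.ofReal_natCast, ← ENNReal.ofReal_mul (Nat.cast_nonneg _)]
          exact ENNReal.ofReal_le_ofReal hn
  refine ⟨D * K / 2, by positivity, hfail, ?_⟩
  have hexp := ENNReal.tendsto_ofReal (tendsto_exp_neg_mul_rpow_natCast (c := D * K / 2)
    (by positivity) hα)
  rw [ENNReal.ofReal_zero] at hexp
  exact tendsto_of_tendsto_of_tendsto_of_le_of_le' tendsto_const_nhds hexp
    (Eventually.of_forall fun _ => zero_le) hfail
end

section
/- Hybrid extension of the threshold bound, asymptotic form: let K > 0, 0 < α ≤ 1 be real constants and p ∈ [0, 1/2). For each n, let 𝓓ₙ be a finite family of pairwise disjoint finite subsets of Fin n and 𝓞ₙ a finite family of finite subsets of Fin n, with every member of 𝓓ₙ disjoint from every member of 𝓞ₙ, every member of 𝓓ₙ ∪ 𝓞ₙ of cardinality at least K·n^α, and (log(1 + |𝓞ₙ|))/n^α → 0 as n → ∞. Then there exists c > 0 such that for all sufficiently large n, the probability (under the random subset E of Fin n in which each element is included independently with probability p) of the event { ∃ S ⊆ 𝓓ₙ and O ∈ 𝓞ₙ ∪ {∅}, not both S = ∅ and O =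 ∅, such that 2·|E ∩ ((⋃_{L∈S} L) ∪ O)| ≥ |(⋃_{L∈S} L) ∪ O| } is at most exp(−c·n^α). -/
open MeasureTheory

/-!
For a fixed support `T`, "at least half of `T` is in error" is the union of the cylinders
`errSet ω ∩ T = A` over the at most `2 ^ |T|` sets `A ⊆ T` with `|T| ≤ 2|A|`; each has probability
`p ^ |A| (1 - p) ^ (|T| - |A|) ≤ √(p(1-p)) ^ |T|` because `p ≤ 1 - p`. Hence the event has
probability at most `r ^ |T|` with `r = 2√(p(1-p)) < 1`; fix `L > 0` with `r ≤ e^(-L)`. By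
disjointness a combined support built from `S` and `O` has size at least `(|S| + [O ≠ ∅]) K n^α`,
so with `x = e^(-L K n^α)` the union bound over all pairs `(S, O)` gives
`(1 + x) ^ |𝓓| - 1 + (1 + x) ^ |𝓓| |𝓞| x ≤ 2 (|𝓓| + |𝓞|) x`. Since `|𝓓| ≤ n` and
`log (1 + |𝓞|) = o(n^α)`, this is at most `exp (-c n^α)` for `c = K L / 2`.
-/

open Finset Real Filter Topology

set_option linter.deprecated false in
lemma bernoulli_toMeasure_singleton {p : ℝ} (hp0 : 0 ≤ p) (hp1 : p ≤ 1) (b : Bool) :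
    (PMF.bernoulli (min (Real.toNNReal p) 1) (min_le_right _ _)).toMeasure {b}
      = ENNReal.ofReal (if b then p else 1 - p) := by
  rw [PMF.toMeasure_apply_singleton _ _ (measurableSet_singleton _), PMF.bernoulli_apply,
    min_eq_left (Real.toNNReal_le_one.2 hp1)]
  cases b
  · rw [if_neg Bool.false_ne_true, ENNReal.ofReal_sub _ hp0, ENNReal.ofReal_one]
    simp [ENNReal.ofReal]
  · rfl

lemma productBernoulli_errSet_inter_eq {n : ℕ} {p : ℝ} (hp0 : 0 ≤ p) (hp1 : p ≤ 1)
    {A T : Finset (Fin n)} (hAT : A ⊆ T) :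
    productBernoulli n p {ω | errSet ω ∩ T = A}
      = ENNReal.ofReal (p ^ #A * (1 - p) ^ (#T - #A)) := by
  have hcyl : {ω : Fin n → Bool | errSet ω ∩ T = A}
      = (T : Set (Fin n)).pi fun i => {decide (i ∈ A)} := by
    ext ω
    simp only [Set.mem_ofPred_eq, Set.mem_pi, Finset.mem_coe, Set.mem_singleton_iff,
      Finset.ext_iff, errSet, Finset.mem_inter, Finset.mem_filter, Finset.mem_univ, true_and]
    refine ⟨fun h i hi => ?_, fun h i => ?_⟩
    · by_cases hiA : i ∈ A <;> simpa [hi, hiA] using h i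
    · by_cases hiT : i ∈ T
      · simp [hiT, h i hiT]
      · simpa [hiT] using fun hiA => hiT (hAT hiA)
  have hp1' : 0 ≤ 1 - p := by linarith
  rw [hcyl, productBernoulli, Measure.pi_pi_finset]
  simp only [bernoulli_toMeasure_singleton hp0 hp1, decide_eq_true_eq]
  rw [← ENNReal.ofReal_prod_of_nonneg (fun i _ => by split_ifs <;> assumption), prod_ite,
    prod_const, prod_const, filter_mem_eq_inter, inter_eq_right.2 hAT, filter_not,
    filter_mem_eq_inter, inter_eq_right.2 hAT, card_sdiff_of_subset hAT]

lemma pow_mul_one_sub_pow_le_sqrt_pow_s11 {p : ℝ} (hp0 : 0 ≤ p) (hp : p ≤ 1 / 2) {a t : ℕ}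
    (hat : a ≤ t) (hta : t ≤ 2 * a) :
    p ^ a * (1 - p) ^ (t - a) ≤ √(p * (1 - p)) ^ t := by
  obtain ⟨u, v, rfl, rfl⟩ : ∃ u v, a = u + v ∧ t = u + 2 * v :=
    ⟨2 * a - t, t - a, by omega, by omega⟩
  have hpq : 0 ≤ p * (1 - p) := by nlinarith
  have hps : p ≤ √(p * (1 - p)) := Real.le_sqrt_of_sq_le (by nlinarith)
  calc p ^ (u + v) * (1 - p) ^ (u + 2 * v - (u + v))
      = p ^ u * (p * (1 - p)) ^ v := by
        rw [show u + 2 * v - (u + v) = v by omega, pow_add, mul_pow]; ring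
    _ ≤ √(p * (1 - p)) ^ u * (√(p * (1 - p)) ^ 2) ^ v := by
        rw [Real.sq_sqrt hpq]; gcongr
    _ = √(p * (1 - p)) ^ (u + 2 * v) := by rw [← pow_mul, ← pow_add]

def halfInError {n : ℕ} (T : Finset (Fin n)) : Set (Fin n → Bool) :=
  {ω | #T ≤ 2 * #(errSet ω ∩ T)}

lemma productBernoulli_halfInError_le {n : ℕ} {p : ℝ} (hp0 : 0 ≤ p) (hp : p ≤ 1 / 2)
    (T : Finset (Fin n)) :
    productBernoulli n p (halfInError T) ≤ ENNReal.ofReal ((2 * √(p * (1 - p))) ^ #T) := by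
  have hp1 : p ≤ 1 := by linarith
  set 𝒜 := T.powerset.filter fun A => #T ≤ 2 * #A
  have hcover : halfInError T ⊆ ⋃ A ∈ 𝒜, {ω | errSet ω ∩ T = A} := fun ω hω =>
    Set.mem_biUnion (mem_filter.2 ⟨mem_powerset.2 inter_subset_right, hω⟩) rfl
  have hterm : ∀ A ∈ 𝒜, p ^ #A * (1 - p) ^ (#T - #A) ≤ √(p * (1 - p)) ^ #T := fun A hA => by
    obtain ⟨hAT, hA⟩ := mem_filter.1 hA
    exact pow_mul_one_sub_pow_le_sqrt_pow_s11 hp0 hp (card_le_card (mem_powerset.1 hAT)) hA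
  calc productBernoulli n p (halfInError T)
      ≤ ∑ A ∈ 𝒜, productBernoulli n p {ω | errSet ω ∩ T = A} :=
        (measure_mono hcover).trans (measure_biUnion_finset_le _ _)
    _ = ENNReal.ofReal (∑ A ∈ 𝒜, p ^ #A * (1 - p) ^ (#T - #A)) := by
        rw [ENNReal.ofReal_sum_of_nonneg fun A _ => by have := sub_nonneg.2 hp1; positivity]
        exact sum_congr rfl fun A hA => productBernoulli_errSet_inter_eq hp0 hp1
          (mem_powerset.1 (mem_filter.1 hA).1)
    _ ≤ ENNReal.ofReal (∑ _A ∈ T.powerset, √(p * (1 - p)) ^ #T) := by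
        gcongr
        exact (sum_le_sum hterm).trans
          (sum_le_sum_of_subset_of_nonneg (filter_subset _ _) fun _ _ _ => by positivity)
    _ = ENNReal.ofReal ((2 * √(p * (1 - p))) ^ #T) := by
        rw [sum_const, card_powerset, nsmul_eq_mul, mul_pow]; push_cast; rfl

lemma exists_pos_two_sqrt_le_exp_neg {p : ℝ} (hp : p < 1 / 2) :
    ∃ L > 0, 2 * √(p * (1 - p)) ≤ exp (-L) := by
  have hr : 2 * √(p * (1 - p)) < 1 := by
    rw [← lt_div_iff₀' two_pos, sqrt_lt' (by norm_num)]
    nlinarith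
  -- the `max` keeps the logarithm away from `log 0 = 0` when `p = 0`
  refine ⟨-log (max (2 * √(p * (1 - p))) (1 / 2)), ?_, ?_⟩
  · exact neg_pos.2 (log_neg (by positivity) (max_lt hr (by norm_num)))
  · rw [neg_neg, exp_log (by positivity)]
    exact le_max_left _ _

lemma productBernoulli_halfInError_le_pow {n : ℕ} {p L a : ℝ} (hp0 : 0 ≤ p) (hp : p ≤ 1 / 2)
    (hL : 0 ≤ L) (hpL : 2 * √(p * (1 - p)) ≤ exp (-L)) (T : Finset (Fin n)) (m : ℕ)
    (hm : m * a ≤ #T) :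
    productBernoulli n p (halfInError T) ≤ ENNReal.ofReal (exp (-L * a) ^ m) := by
  refine (productBernoulli_halfInError_le hp0 hp T).trans (ENNReal.ofReal_le_ofReal ?_)
  calc (2 * √(p * (1 - p))) ^ #T ≤ exp (-L) ^ #T := pow_le_pow_left₀ (by positivity) hpL _
    _ = exp (-L * #T) := by rw [← exp_nat_mul]; ring_nf
    _ ≤ exp (-L * a) ^ m := by rw [← exp_nat_mul]; exact exp_le_exp.2 (by nlinarith)

lemma card_le_fintype_card_of_pairwise_disjoint {α : Type*} [Fintype α] [DecidableEq α]
    {𝓓 : Finset (Finset α)} (hdisj : (𝓓 : Set (Finset α)).Pairwise fun A B => Disjoint A B)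
    (hne : ∀ A ∈ 𝓓, A.Nonempty) : #𝓓 ≤ Fintype.card α :=
  (card_le_card_biUnion hdisj hne).trans (card_le_univ _)

lemma card_mul_le_card_biUnion {α : Type*} [DecidableEq α] {S : Finset (Finset α)} {a : ℝ}
    (hS : (S : Set (Finset α)).Pairwise fun A B => Disjoint A B) (ha : ∀ L ∈ S, a ≤ #L) :
    #S * a ≤ #(S.biUnion id) := by
  rw [card_biUnion (show (S : Set (Finset α)).PairwiseDisjoint id from hS), Nat.cast_sum,
    ← nsmul_eq_mul, ← sum_const]
  exact sum_le_sum ha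

lemma sum_powerset_pow_card {α : Type*} (s : Finset α) (x : ℝ) :
    ∑ t ∈ s.powerset, x ^ #t = (1 + x) ^ #s := by
  simpa [add_comm] using sum_pow_mul_eq_add_pow x 1 s

lemma sum_powerset_erase_empty_pow_card {α : Type*} [DecidableEq α] (s : Finset α) (x : ℝ) :
    ∑ t ∈ s.powerset.erase ∅, x ^ #t = (1 + x) ^ #s - 1 := by
  rw [sum_erase_eq_sub (empty_mem_powerset _), sum_powerset_pow_card, card_empty, pow_zero]

lemma sum_powerset_product_pow_card_succ {α β : Type*} (s : Finset α) (u : Finset β) (x : ℝ) :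
    ∑ z ∈ s.powerset ×ˢ u, x ^ (#z.1 + 1) = (1 + x) ^ #s * (#u * x) := by
  simp only [sum_product, pow_succ, sum_const, nsmul_eq_mul]
  rw [← mul_sum, ← sum_mul, sum_powerset_pow_card]
  ring

lemma setOf_exists_support_subset {Ω α : Type*} [DecidableEq α] (bad : Finset α → Set Ω)
    (𝓓 𝓞 : Finset (Finset α)) :
    {ω | ∃ S ⊆ 𝓓, ∃ O ∈ 𝓞 ∪ {∅}, ¬(S = ∅ ∧ O = ∅) ∧ ω ∈ bad (S.biUnion id ∪ O)}
      ⊆ (⋃ S ∈ 𝓓.powerset.erase ∅, bad (S.biUnion id))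
        ∪ ⋃ z ∈ 𝓓.powerset ×ˢ 𝓞, bad (z.1.biUnion id ∪ z.2) := by
  rintro ω ⟨S, hS, O, hO, hne, hω⟩
  rcases mem_union.1 hO with hO | hO
  · exact Or.inr (Set.mem_biUnion (x := (S, O)) (mem_product.2 ⟨mem_powerset.2 hS, hO⟩) hω)
  · obtain rfl := mem_singleton.1 hO
    refine Or.inl (Set.mem_biUnion (mem_erase.2 ⟨fun h => hne ⟨h, rfl⟩, mem_powerset.2 hS⟩) ?_)
    simpa using hω

lemma measure_exists_support_le {Ω α : Type*} [MeasurableSpace Ω] [DecidableEq α]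
    (μ : Measure Ω) (bad : Finset α → Set Ω) {a x : ℝ} (hx : 0 ≤ x)
    {𝓓 𝓞 : Finset (Finset α)}
    (hdisj : (𝓓 : Set (Finset α)).Pairwise fun A B => Disjoint A B)
    (hDO : ∀ D ∈ 𝓓, ∀ O ∈ 𝓞, Disjoint D O) (hcard : ∀ L ∈ 𝓓 ∪ 𝓞, a ≤ #L)
    (hbad : ∀ (T : Finset α) (m : ℕ), m * a ≤ #T → μ (bad T) ≤ ENNReal.ofReal (x ^ m)) :
    μ {ω | ∃ S ⊆ 𝓓, ∃ O ∈ 𝓞 ∪ {∅}, ¬(S = ∅ ∧ O = ∅) ∧ ω ∈ bad (S.biUnion id ∪ O)}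
      ≤ ENNReal.ofReal ((1 + x) ^ #𝓓 - 1 + (1 + x) ^ #𝓓 * (#𝓞 * x)) := by
  have hcardS : ∀ S ⊆ 𝓓, #S * a ≤ #(S.biUnion id) := fun S hS =>
    card_mul_le_card_biUnion (hdisj.mono (coe_subset.2 hS)) fun L hL =>
      hcard L (mem_union_left _ (hS hL))
  have hcardSO : ∀ z ∈ 𝓓.powerset ×ˢ 𝓞, ((#z.1 + 1 : ℕ) : ℝ) * a ≤ #(z.1.biUnion id ∪ z.2) := by
    intro z hz
    obtain ⟨hS, hO⟩ := mem_product.1 hz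
    have hS := mem_powerset.1 hS
    have hSO : Disjoint (z.1.biUnion id) z.2 :=
      (disjoint_biUnion_left _ _ _).2 fun D hD => hDO D (hS hD) _ hO
    rw [card_union_of_disjoint hSO]
    push_cast
    linarith [hcardS _ hS, hcard _ (mem_union_right _ hO)]
  calc _ ≤ ∑ S ∈ 𝓓.powerset.erase ∅, μ (bad (S.biUnion id))
        + ∑ z ∈ 𝓓.powerset ×ˢ 𝓞, μ (bad (z.1.biUnion id ∪ z.2)) :=
        (measure_mono (setOf_exists_support_subset bad 𝓓 𝓞)).trans <|
          (measure_union_le _ _).trans <|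
            add_le_add (measure_biUnion_finset_le _ _) (measure_biUnion_finset_le _ _)
    _ ≤ ∑ S ∈ 𝓓.powerset.erase ∅, ENNReal.ofReal (x ^ #S)
        + ∑ z ∈ 𝓓.powerset ×ˢ 𝓞, ENNReal.ofReal (x ^ (#z.1 + 1)) :=
        add_le_add
          (sum_le_sum fun S hS => hbad _ _ (hcardS S (mem_powerset.1 (mem_of_mem_erase hS))))
          (sum_le_sum fun z hz => hbad _ _ (hcardSO z hz))
    _ = _ := by
        rw [← ENNReal.ofReal_sum_of_nonneg fun _ _ => by positivity,
          ← ENNReal.ofReal_sum_of_nonneg fun _ _ => by positivity,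
          sum_powerset_erase_empty_pow_card, sum_powerset_product_pow_card_succ,
          ← ENNReal.ofReal_add (sub_nonneg.2 (one_le_pow₀ (by linarith))) (by positivity)]

lemma one_add_pow_sub_one_add_le {x : ℝ} (hx : 0 ≤ x) {D M : ℕ} (hy : (D + M) * x ≤ 1) :
    (1 + x) ^ D - 1 + (1 + x) ^ D * (M * x) ≤ 2 * ((D + M) * x) := by
  have hexp : ∀ k : ℕ, (1 + x) ^ k ≤ exp (k * x) := fun k => by
    rw [exp_nat_mul]
    exact pow_le_pow_left₀ (by linarith) (by linarith [add_one_le_exp x]) k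
  have hM : 1 + M * x ≤ exp (M * x) := by linarith [add_one_le_exp (M * x)]
  have hy0 : 0 ≤ (D + M) * x := by positivity
  calc (1 + x) ^ D - 1 + (1 + x) ^ D * (M * x) = (1 + x) ^ D * (1 + M * x) - 1 := by ring
    _ ≤ exp (D * x) * exp (M * x) - 1 := by gcongr; exact hexp D
    _ = exp ((D + M) * x) - 1 := by rw [← exp_add]; ring_nf
    _ ≤ 2 * ((D + M) * x) := by
        simpa [abs_of_nonneg hy0] using (le_abs_self _).trans
          (abs_exp_sub_one_le (x := (D + M) * x) (by rwa [abs_of_nonneg hy0]))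

lemma union_bound_le_exp_neg {x c t : ℝ} (hx : 0 ≤ x) (hct : 0 ≤ c * t) {D M n : ℕ}
    (hDn : D ≤ n) (hn : 1 ≤ n) (hgrowth : 2 * n * (1 + M) ≤ exp (c * t))
    (hxct : x ≤ exp (-(2 * c) * t)) :
    (1 + x) ^ D - 1 + (1 + x) ^ D * (M * x) ≤ exp (-c * t) := by
  have hsmall : 2 * ((D + M) * x) ≤ exp (-c * t) :=
    calc 2 * ((D + M) * x) ≤ 2 * (n * (1 + M) * x) := by
          have hDn : (D : ℝ) ≤ n := by exact_mod_cast hDn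
          have hn1 : (1 : ℝ) ≤ n := by exact_mod_cast hn
          gcongr
          nlinarith [M.cast_nonneg (α := ℝ)]
      _ = 2 * n * (1 + M) * x := by ring
      _ ≤ exp (c * t) * exp (-(2 * c) * t) := by gcongr
      _ = exp (-c * t) := by rw [← exp_add]; ring_nf
  have hle : exp (-c * t) ≤ 1 := exp_le_one_iff.2 (by linarith)
  exact (one_add_pow_sub_one_add_le hx (by linarith)).trans hsmall

lemma eventually_two_mul_mul_le_exp {α c : ℝ} (hα : 0 < α) (hc : 0 < c) {f : ℕ → ℝ}
    (hf : ∀ n, 0 < f n) (hlog : Tendsto (fun n : ℕ => log (f n) / (n : ℝ) ^ α) atTop (𝓝 0)) :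
    ∀ᶠ n : ℕ in atTop, 2 * n * f n ≤ exp (c * (n : ℝ) ^ α) := by
  have hrpow : Tendsto (fun n : ℕ => (n : ℝ) ^ α) atTop atTop :=
    (tendsto_rpow_atTop hα).comp tendsto_natCast_atTop_atTop
  have hlogn : Tendsto (fun n : ℕ => log n / (n : ℝ) ^ α) atTop (𝓝 0) :=
    (isLittleO_log_rpow_atTop hα).tendsto_div_nhds_zero.comp tendsto_natCast_atTop_atTop
  have hsum := ((tendsto_const_nhds (x := log 2)).div_atTop hrpow).add (hlogn.add hlog)
  rw [add_zero, add_zero] at hsum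
  filter_upwards [hsum.eventually_lt_const hc, eventually_ge_atTop 1] with n hn hn1
  have hn0 : (0 : ℝ) < n := by exact_mod_cast hn1
  have hpos : 0 < (n : ℝ) ^ α := rpow_pos_of_pos hn0 α
  have hnf : 0 < n * f n := mul_pos hn0 (hf n)
  rw [← add_div, ← add_div, div_lt_iff₀ hpos, ← log_mul hn0.ne' (hf n).ne',
    ← log_mul two_ne_zero hnf.ne', ← mul_assoc] at hn
  calc 2 * n * f n = exp (log (2 * n * f n)) := (exp_log (mul_pos (mul_pos two_pos hn0) (hf n))).symm
    _ ≤ exp (c * (n : ℝ) ^ α) := exp_le_exp.2 hn.le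

theorem hybrid_threshold_bound_general (K α p : ℝ)
    (hK : 0 < K) (hα0 : 0 < α) (hp0 : 0 ≤ p) (hp : p < 1 / 2)
    (𝓓 𝓞 : (n : ℕ) → Finset (Finset (Fin n)))
    (hdisjD : ∀ n : ℕ, ((𝓓 n : Set (Finset (Fin n)))).Pairwise fun A B => Disjoint A B)
    (hDO : ∀ n : ℕ, ∀ D ∈ 𝓓 n, ∀ O ∈ 𝓞 n, Disjoint D O)
    (hcard : ∀ n : ℕ, ∀ L ∈ 𝓓 n ∪ 𝓞 n, K * (n : ℝ) ^ α ≤ (L.card : ℝ))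
    (hlog : Filter.Tendsto (fun n : ℕ => Real.log (1 + ((𝓞 n).card : ℝ)) / (n : ℝ) ^ α)
      Filter.atTop (nhds 0)) :
    ∃ c > 0, ∀ᶠ n : ℕ in Filter.atTop,
      productBernoulli n p
          {ω | ∃ S ⊆ 𝓓 n, ∃ O ∈ 𝓞 n ∪ {∅}, ¬(S = ∅ ∧ O = ∅) ∧
            (S.biUnion id ∪ O).card ≤ 2 * (errSet ω ∩ (S.biUnion id ∪ O)).card}
        ≤ ENNReal.ofReal (Real.exp (-c * (n : ℝ) ^ α)) := by
  obtain ⟨L, hL, hpL⟩ := exists_pos_two_sqrt_le_exp_neg hp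
  have hc : 0 < K * L / 2 := by positivity
  refine ⟨K * L / 2, hc, ?_⟩
  filter_upwards [eventually_ge_atTop 1,
    eventually_two_mul_mul_le_exp hα0 hc (fun n => by positivity) hlog] with n hn hgrowth
  have ha : 0 < K * (n : ℝ) ^ α := by
    have : (0 : ℝ) < n := by exact_mod_cast hn
    positivity
  have hD : #(𝓓 n) ≤ n := by
    simpa using card_le_fintype_card_of_pairwise_disjoint (hdisjD n) fun D hD =>
      card_pos.1 (by exact_mod_cast ha.trans_le (hcard n D (mem_union_left _ hD)))
  set x := exp (-L * (K * (n : ℝ) ^ α))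
  calc _ ≤ ENNReal.ofReal ((1 + x) ^ #(𝓓 n) - 1 + (1 + x) ^ #(𝓓 n) * (#(𝓞 n) * x)) :=
        measure_exists_support_le _ halfInError (exp_pos _).le (hdisjD n) (hDO n) (hcard n)
          fun T m hm => productBernoulli_halfInError_le_pow hp0 hp.le hL.le hpL T m hm
    _ ≤ _ := ENNReal.ofReal_le_ofReal <| union_bound_le_exp_neg (exp_pos _).le (by positivity)
        hD hn hgrowth (exp_le_exp.2 (le_of_eq (by ring)))

/-- Hybrid extension of the threshold bound, asymptotic form: with a disjoint
sector `𝓓ₙ` (pairwise disjoint, and disjoint from all members of the overlapping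
sector `𝓞ₙ`), all members of `𝓓ₙ ∪ 𝓞ₙ` of cardinality at least `K·n^α`, and
`log(1 + |𝓞ₙ|)/n^α → 0`, there is a `c > 0` such that eventually the probability
that some combined logical support `(⋃_{L∈S} L) ∪ O` (with `S ⊆ 𝓓ₙ`,
`O ∈ 𝓞ₙ ∪ {∅}`, not both empty) has at least half of its support in error is at
most `exp(−c·n^α)`. -/
theorem hybrid_threshold_bound (K α p : ℝ)
    (hK : 0 < K) (hα0 : 0 < α) (hα1 : α ≤ 1) (hp0 : 0 ≤ p) (hp : p < 1 / 2)
    (𝓓 𝓞 : (n : ℕ) → Finset (Finset (Fin n)))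
    (hdisjD : ∀ n : ℕ, ((𝓓 n : Set (Finset (Fin n)))).Pairwise fun A B => Disjoint A B)
    (hDO : ∀ n : ℕ, ∀ D ∈ 𝓓 n, ∀ O ∈ 𝓞 n, Disjoint D O)
    (hcard : ∀ n : ℕ, ∀ L ∈ 𝓓 n ∪ 𝓞 n, K * (n : ℝ) ^ α ≤ (L.card : ℝ))
    (hlog : Filter.Tendsto (fun n : ℕ => Real.log (1 + ((𝓞 n).card : ℝ)) / (n : ℝ) ^ α)
      Filter.atTop (nhds 0)) :
    ∃ c > 0, ∀ᶠ n : ℕ in Filter.atTop,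
      productBernoulli n p
          {ω | ∃ S ⊆ 𝓓 n, ∃ O ∈ 𝓞 n ∪ {∅}, ¬(S = ∅ ∧ O = ∅) ∧
            (S.biUnion id ∪ O).card ≤ 2 * (errSet ω ∩ (S.biUnion id ∪ O)).card}
        ≤ ENNReal.ofReal (Real.exp (-c * (n : ℝ) ^ α)) :=
  hybrid_threshold_bound_general K α p hK hα0 hp0 hp 𝓓 𝓞 hdisjD hDO hcard hlog
end

section
/- Proposition (reduction of logical failure to basis bad events under the covering condition): let B be a nonempty finite index set, and for each i ∈ B let v_i : Fin n → ZMod 2 be a vector with support L_i := {q : v_i q ≠ 0}, together with a real load o_i ≥ 0. For a nonempty S ⊆ B write M_S for the support of ∑_{i∈S} v_i. Assume the covering condition: for every nonempty S ⊆ B, ∑_{i∈S}(|L_i|/2 − o_i) ≤ |M_S|/2. Then for every finite subset E of Fin n: if there exists a nonempty S ⊆ B with ∑_{i∈S} v_i ≠ 0 and 2·|E ∩ M_S| ≥ |M_S|, then there exists i ∈ B with |E ∩ L_i| ≥ |L_i|/2 − o_i. -/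
/-!
A point in the support of `∑_{i∈S} v_i` lies in the support of some `v_i` with `i ∈ S`,
so `|E ∩ M_S| ≤ ∑_{i∈S} |E ∩ L_i|`. Chaining this with the failure hypothesis and the
covering condition gives `∑_{i∈S} (|L_i|/2 - o_i) ≤ ∑_{i∈S} |E ∩ L_i|`, and then some
summand must obey the same inequality.
-/

def zsupport {n : ℕ} (w : Fin n → ZMod 2) : Finset (Fin n) :=
  Finset.univ.filter fun q => w q ≠ 0

theorem zsupport_sum_subset_biUnion {n : ℕ} {ι : Type*} (S : Finset ι)
    (v : ι → Fin n → ZMod 2) :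
    zsupport (∑ i ∈ S, v i) ⊆ S.biUnion fun i => zsupport (v i) := by
  intro q hq
  simp only [zsupport, Finset.mem_filter, Finset.mem_univ, true_and, Finset.mem_biUnion,
    Finset.sum_apply] at hq ⊢
  exact Finset.exists_ne_zero_of_sum_ne_zero hq

theorem card_inter_zsupport_sum_le {n : ℕ} {ι : Type*} (E : Finset (Fin n)) (S : Finset ι)
    (v : ι → Fin n → ZMod 2) :
    (E ∩ zsupport (∑ i ∈ S, v i)).card ≤ ∑ i ∈ S, (E ∩ zsupport (v i)).card :=
  calc (E ∩ zsupport (∑ i ∈ S, v i)).card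
      ≤ (S.biUnion fun i => E ∩ zsupport (v i)).card := by
        rw [← Finset.inter_biUnion]
        exact Finset.card_le_card
          (Finset.inter_subset_inter_left (zsupport_sum_subset_biUnion S v))
    _ ≤ ∑ i ∈ S, (E ∩ zsupport (v i)).card := Finset.card_biUnion_le

theorem covering_condition_reduction_general {n : ℕ} {ι : Type*}
    (B : Finset ι)
    (v : ι → Fin n → ZMod 2) (o : ι → ℝ)
    (hcov : ∀ S ⊆ B, S.Nonempty →
      ∑ i ∈ S, (((zsupport (v i)).card : ℝ) / 2 - o i)
        ≤ ((zsupport (∑ i ∈ S, v i)).card : ℝ) / 2)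
    (E : Finset (Fin n))
    (hfail : ∃ S ⊆ B, S.Nonempty ∧ (∑ i ∈ S, v i) ≠ 0 ∧
      (zsupport (∑ i ∈ S, v i)).card ≤ 2 * (E ∩ zsupport (∑ i ∈ S, v i)).card) :
    ∃ i ∈ B, ((zsupport (v i)).card : ℝ) / 2 - o i ≤ ((E ∩ zsupport (v i)).card : ℝ) := by
  obtain ⟨S, hSB, hSne, -, hhalf⟩ := hfail
  have hhalf' : ((zsupport (∑ i ∈ S, v i)).card : ℝ)
      ≤ 2 * (E ∩ zsupport (∑ i ∈ S, v i)).card := by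
    exact_mod_cast hhalf
  obtain ⟨i, hiS, hi⟩ := Finset.exists_le_of_sum_le hSne <|
    calc ∑ i ∈ S, (((zsupport (v i)).card : ℝ) / 2 - o i)
        ≤ ((zsupport (∑ i ∈ S, v i)).card : ℝ) / 2 := hcov S hSB hSne
      _ ≤ (E ∩ zsupport (∑ i ∈ S, v i)).card := by linarith
      _ ≤ ∑ i ∈ S, ((E ∩ zsupport (v i)).card : ℝ) := by
        exact_mod_cast card_inter_zsupport_sum_le E S v
  exact ⟨i, hSB hiS, hi⟩

/-- Reduction of logical failure to basis bad events under the covering condition: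
if for every nonempty `S ⊆ B` the shifted thresholds satisfy
`∑_{i∈S}(|L i|/2 − o i) ≤ |M_S|/2` (where `M_S` is the support of `∑_{i∈S} v i`),
then any error `E` covering at least half of some nonzero `M_S` must cover at least
`|L i|/2 − o i` of some basis support `L i`. -/
theorem covering_condition_reduction {n : ℕ} {ι : Type*} [DecidableEq ι]
    (B : Finset ι) (hB : B.Nonempty)
    (v : ι → Fin n → ZMod 2) (o : ι → ℝ) (ho : ∀ i ∈ B, 0 ≤ o i)
    (hcov : ∀ S ⊆ B, S.Nonempty →
      ∑ i ∈ S, (((zsupport (v i)).card : ℝ) / 2 - o i)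
        ≤ ((zsupport (∑ i ∈ S, v i)).card : ℝ) / 2)
    (E : Finset (Fin n))
    (hfail : ∃ S ⊆ B, S.Nonempty ∧ (∑ i ∈ S, v i) ≠ 0 ∧
      (zsupport (∑ i ∈ S, v i)).card ≤ 2 * (E ∩ zsupport (∑ i ∈ S, v i)).card) :
    ∃ i ∈ B, ((zsupport (v i)).card : ℝ) / 2 - o i ≤ ((E ∩ zsupport (v i)).card : ℝ) :=
  covering_condition_reduction_general B v o hcov E hfail
end

section
/- Telescoping identity producing the materialized symmetry of the linearly deformed tile code: for each natural number j let h_j : ℤ × ℤ → ZMod 2 be the indicator function of the four-point set {(2^{j+1}−2, 2^j−1), (2^{j+1}−2, 2^{j+1}−1), (2^{j+2}−2, 2^{j+1}−1), (2^{j+2}−2, 2^{j+2}−1)} ⊆ ℤ × ℤ. Then for every natural number k, the sum ∑_{j=0}^{k} h_j (pointwise in ZMod 2) equals the indicator function of the four-point set {(0,0), (0,1), (2^{k+2}−2, 2^{k+1}−1), (2^{k+2}−2, 2^{k+2}−1)}. -/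
/-!
Writing `P j` for the two points `(2^{j+1}-2, 2^j-1)` and `(2^{j+1}-2, 2^{j+1}-1)` of the
column `x = 2^{j+1}-2`, the support of `h j` is the disjoint union of `P j` and `P (j+1)`, so
`h j = 1_{P j} + 1_{P (j+1)}`. Over `ZMod 2` the sum over `j ≤ k` telescopes to
`1_{P 0} + 1_{P (k+1)}`, and these two pairs again lie in different columns.
-/

theorem sum_range_add_succ_of_charTwo {R : Type*} [Semiring R] [CharP R 2] (f : ℕ → R) (n : ℕ) :
    ∑ i ∈ Finset.range n, (f i + f (i + 1)) = f 0 + f n := by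
  induction n with
  | zero => simp [CharTwo.add_self_eq_zero]
  | succ n ih => rw [Finset.sum_range_succ, ih, ← add_assoc, CharTwo.add_cancel_right]

theorem ite_or_eq_add_of_not_and {M : Type*} [AddZeroClass M] {p q : Prop} [Decidable p]
    [Decidable q] (a : M) (hpq : ¬(p ∧ q)) :
    (if p ∨ q then a else 0) = (if p then a else 0) + if q then a else 0 := by
  by_cases hp : p <;> by_cases hq : q <;> simp_all

def InTilePair (j : ℕ) (v : ℤ × ℤ) : Prop :=
  v = (2 ^ (j + 1) - 2, 2 ^ j - 1) ∨ v = (2 ^ (j + 1) - 2, 2 ^ (j + 1) - 1)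

instance (j : ℕ) (v : ℤ × ℤ) : Decidable (InTilePair j v) :=
  inferInstanceAs (Decidable (_ ∨ _))

theorem InTilePair.fst_eq {j : ℕ} {v : ℤ × ℤ} (hv : InTilePair j v) : v.1 = 2 ^ (j + 1) - 2 := by
  rcases hv with rfl | rfl <;> rfl

theorem not_inTilePair_and_of_ne {i j : ℕ} (hij : i ≠ j) (v : ℤ × ℤ) :
    ¬(InTilePair i v ∧ InTilePair j v) := by
  rintro ⟨hi, hj⟩
  have hpow : (2 : ℤ) ^ (i + 1) = 2 ^ (j + 1) := by linarith [hi.fst_eq, hj.fst_eq]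
  exact hij (by simpa using pow_right_injective₀ two_pos (by norm_num) hpow)

/-- Telescoping identity producing the materialized symmetry of the linearly
deformed tile code: with `h j` the `ZMod 2`-valued indicator function of the
four-point set
`{(2^{j+1}−2, 2^j−1), (2^{j+1}−2, 2^{j+1}−1), (2^{j+2}−2, 2^{j+1}−1), (2^{j+2}−2, 2^{j+2}−1)}`,
the pointwise sum `∑_{j=0}^{k} h j` is the indicator function of
`{(0,0), (0,1), (2^{k+2}−2, 2^{k+1}−1), (2^{k+2}−2, 2^{k+2}−1)}`. -/
theorem tile_symmetry_telescoping (h : ℕ → ℤ × ℤ → ZMod 2)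
    (hh : ∀ (j : ℕ) (v : ℤ × ℤ),
      h j v = if v = ((2 : ℤ) ^ (j + 1) - 2, (2 : ℤ) ^ j - 1) ∨
          v = ((2 : ℤ) ^ (j + 1) - 2, (2 : ℤ) ^ (j + 1) - 1) ∨
          v = ((2 : ℤ) ^ (j + 2) - 2, (2 : ℤ) ^ (j + 1) - 1) ∨
          v = ((2 : ℤ) ^ (j + 2) - 2, (2 : ℤ) ^ (j + 2) - 1) then 1 else 0)
    (k : ℕ) (v : ℤ × ℤ) :
    ∑ j ∈ Finset.range (k + 1), h j v =
      if v = ((0 : ℤ), (0 : ℤ)) ∨ v = ((0 : ℤ), (1 : ℤ)) ∨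
          v = ((2 : ℤ) ^ (k + 2) - 2, (2 : ℤ) ^ (k + 1) - 1) ∨
          v = ((2 : ℤ) ^ (k + 2) - 2, (2 : ℤ) ^ (k + 2) - 1) then 1 else 0 := by
  let pairInd (j : ℕ) : ZMod 2 := if InTilePair j v then 1 else 0
  have hsplit (j : ℕ) : h j v = pairInd j + pairInd (j + 1) := by
    rw [hh, ← ite_or_eq_add_of_not_and _ (not_inTilePair_and_of_ne j.succ_ne_self.symm v)]
    exact if_congr (by simp only [InTilePair, or_assoc]) rfl rfl
  calc ∑ j ∈ Finset.range (k + 1), h j v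
      = ∑ j ∈ Finset.range (k + 1), (pairInd j + pairInd (j + 1)) := by simp only [hsplit]
    _ = pairInd 0 + pairInd (k + 1) := sum_range_add_succ_of_charTwo pairInd (k + 1)
    _ = _ := by
      rw [← ite_or_eq_add_of_not_and _ (not_inTilePair_and_of_ne k.succ_ne_zero.symm v)]
      exact if_congr (by norm_num [InTilePair, or_assoc]) rfl rfl
end
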